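/- Let L = L₁ × ℝⁿ with L₁ a locally compact abelian group containing a compact open subgroup, and φ = (α β; γ δ) a continuous endomorphism of L with δ a linear automorphism of ℝⁿ. Then the quasi-determinant det(φ) := α − β∘δ⁻¹∘γ is a topological automorphism of L₁ if and only if α is a topological automorphism of L₁. -/

import Mathlib

/-!
Write `N = β ∘ δ⁻¹ ∘ γ`, so that `det(φ) = α - N`. The image of `ℝⁿ` under any continuous
homomorphism into `L₁` is connected, hence lies in the compact open subgroup, and `γ` maps it to
a bounded subgroup of `ℝⁿ`, which must be trivial. Thus `N ∘ ψ ∘ N = 0` for every continuous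
endomorphism `ψ`, and then `α - N` is invertible exactly when `α` is, with
`(α - N)⁻¹ = α⁻¹ + α⁻¹ ∘ N ∘ α⁻¹`.
-/

/-- `f : M → M` is a topological automorphism: a group automorphism that is a
homeomorphism. -/
def IsTopAut {M : Type*} [AddCommGroup M] [TopologicalSpace M] (f : M → M) : Prop :=
  ∃ e : M ≃+ M, ⇑e = f ∧ Continuous ⇑e ∧ Continuous ⇑e.symm

theorem AddEquiv.continuous_symm_of_finiteDimensional {E F : Type*}
    [NormedAddCommGroup E] [NormedSpace ℝ E] [NormedAddCommGroup F] [NormedSpace ℝ F]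
    [FiniteDimensional ℝ F] (e : E ≃+ F) (he : Continuous e) : Continuous e.symm :=
  let f : E ≃ₗ[ℝ] F := { e with map_smul' := map_real_smul e he }
  f.symm.toLinearMap.continuous_of_finiteDimensional

theorem AddSubgroup.eq_bot_of_isBounded {E : Type*} [NormedAddCommGroup E] [NormedSpace ℝ E]
    (S : AddSubgroup E) (hS : Bornology.IsBounded (S : Set E)) : S = ⊥ := by
  obtain ⟨C, hC⟩ := hS.exists_norm_le
  refine (eq_bot_iff_forall S).2 fun x hx => norm_eq_zero.1 ?_
  by_contra hne
  have hpos : 0 < ‖x‖ := lt_of_le_of_ne (norm_nonneg x) (Ne.symm hne)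
  obtain ⟨k, hk⟩ := exists_nat_gt (C / ‖x‖)
  have hkx : (k : ℝ) * ‖x‖ ≤ C := by
    simpa [← Nat.cast_smul_eq_nsmul ℝ, norm_smul] using hC _ (S.nsmul_mem hx k)
  rw [div_lt_iff₀ hpos] at hk
  linarith

theorem AddMonoidHom.range_subset_of_isOpen {V G : Type*} [AddGroup V] [TopologicalSpace V]
    [PreconnectedSpace V] [AddGroup G] [TopologicalSpace G] [IsTopologicalAddGroup G]
    (U : AddSubgroup G) (hU : IsOpen (U : Set G)) (β : V →+ G) (hβ : Continuous β) :
    Set.range β ⊆ U :=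
  ((isPreconnected_range hβ).subset_connectedComponent ⟨0, map_zero β⟩).trans
    (IsClopen.connectedComponent_subset ⟨U.isClosed_of_isOpen hU, hU⟩ U.zero_mem)

theorem AddMonoidHom.comp_eq_zero_of_isCompact_of_isOpen {V G E : Type*} [AddGroup V]
    [TopologicalSpace V] [PreconnectedSpace V] [AddGroup G] [TopologicalSpace G]
    [IsTopologicalAddGroup G] [NormedAddCommGroup E] [NormedSpace ℝ E]
    (U : AddSubgroup G) (hUc : IsCompact (U : Set G)) (hUo : IsOpen (U : Set G))
    (γ : G →+ E) (hγ : Continuous γ) (β : V →+ G) (hβ : Continuous β) : γ.comp β = 0 := by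
  have hbdd : Bornology.IsBounded ((γ.comp β).range : Set E) := by
    refine (hUc.image hγ).isBounded.subset ?_
    rintro _ ⟨v, rfl⟩
    exact ⟨β v, β.range_subset_of_isOpen U hUo hβ ⟨v, rfl⟩, rfl⟩
  have hrange := (γ.comp β).range.eq_bot_of_isBounded hbdd
  ext v
  exact AddSubgroup.mem_bot.1 (hrange ▸ AddMonoidHom.mem_range.2 ⟨v, rfl⟩)

section Perturbation

variable {M : Type*} [AddCommGroup M] [TopologicalSpace M] [IsTopologicalAddGroup M]
  {α N : M →+ M}

theorem IsTopAut.sub (hα : IsTopAut α) (hN : Continuous N)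
    (hNN : ∀ ψ : M →+ M, Continuous ψ → ∀ x, N (ψ (N x)) = 0) :
    IsTopAut (fun x => α x - N x) := by
  obtain ⟨e, hαe, he, he_symm⟩ := hα
  rw [← hαe]
  have hNeN : ∀ x, N (e.symm (N x)) = 0 := hNN e.symm.toAddMonoidHom he_symm
  refine ⟨{ toFun := fun x => e x - N x
            invFun := fun y => e.symm (y + N (e.symm y))
            left_inv := fun x => ?_
            right_inv := fun y => ?_
            map_add' := fun x y => ?_ }, rfl, he.sub hN,
    he_symm.comp (continuous_id.add (hN.comp he_symm))⟩
  · simp only [map_sub, e.symm_apply_apply, hNeN, sub_zero, sub_add_cancel]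
  · simp only [map_add, e.apply_symm_apply, hNeN, add_zero, add_sub_cancel_right]
  · simp only [map_add]
    abel

theorem isTopAut_sub_iff (hN : Continuous N)
    (hNN : ∀ ψ : M →+ M, Continuous ψ → ∀ x, N (ψ (N x)) = 0) :
    IsTopAut (fun x => α x - N x) ↔ IsTopAut α := by
  refine ⟨fun h => ?_, fun h => h.sub hN hNN⟩
  have hNN' : ∀ ψ : M →+ M, Continuous ψ → ∀ x, (-N) (ψ ((-N) x)) = 0 := by
    simpa only [AddMonoidHom.neg_apply, map_neg, neg_eq_zero] using hNN
  simpa only [AddMonoidHom.sub_apply, AddMonoidHom.neg_apply, sub_neg_eq_add, sub_add_cancel]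
    using IsTopAut.sub (α := α - N) h hN.neg hNN'

end Perturbation

theorem stmt_15_general {L₁ : Type*} [AddCommGroup L₁] [TopologicalSpace L₁] [IsTopologicalAddGroup L₁]
    (U : AddSubgroup L₁) (hUc : IsCompact (U : Set L₁)) (hUo : IsOpen (U : Set L₁))
    (n : ℕ)
    (α : L₁ →+ L₁)
    (β : (Fin n → ℝ) →+ L₁) (hβ : Continuous ⇑β)
    (γ : L₁ →+ (Fin n → ℝ)) (hγ : Continuous ⇑γ)
    (d : (Fin n → ℝ) ≃+ (Fin n → ℝ)) (hd : Continuous ⇑d) :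
    IsTopAut (fun x : L₁ => α x - β (d.symm (γ x))) ↔ IsTopAut ⇑α := by
  let N : L₁ →+ L₁ := β.comp (d.symm.toAddMonoidHom.comp γ)
  have hN : Continuous N := hβ.comp ((d.continuous_symm_of_finiteDimensional hd).comp hγ)
  have hNN : ∀ ψ : L₁ →+ L₁, Continuous ψ → ∀ x, N (ψ (N x)) = 0 := fun ψ hψ x => by
    have hγψβ := γ.comp_eq_zero_of_isCompact_of_isOpen U hUc hUo hγ (ψ.comp β) (hψ.comp hβ)
    show β (d.symm (γ.comp (ψ.comp β) (d.symm (γ x)))) = 0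
    rw [hγψβ, AddMonoidHom.zero_apply, map_zero, map_zero]
  exact isTopAut_sub_iff hN hNN

/-- Let `L = L₁ × ℝⁿ` with `L₁` a locally compact abelian group containing a compact open
subgroup, and let `φ = (α β; γ δ)` be a continuous endomorphism of `L` with `δ` an
automorphism of `ℝⁿ` (packaged as `d`). Then the quasi-determinant
`det(φ) = α − β ∘ δ⁻¹ ∘ γ` is a topological automorphism of `L₁` if and only if `α` is a
topological automorphism of `L₁`. -/
theorem stmt_15 {L₁ : Type*} [AddCommGroup L₁] [TopologicalSpace L₁] [IsTopologicalAddGroup L₁]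
    [T2Space L₁] [LocallyCompactSpace L₁]
    (U : AddSubgroup L₁) (hUc : IsCompact (U : Set L₁)) (hUo : IsOpen (U : Set L₁))
    (n : ℕ)
    (α : L₁ →+ L₁) (hα : Continuous ⇑α)
    (β : (Fin n → ℝ) →+ L₁) (hβ : Continuous ⇑β)
    (γ : L₁ →+ (Fin n → ℝ)) (hγ : Continuous ⇑γ)
    (d : (Fin n → ℝ) ≃+ (Fin n → ℝ)) (hd : Continuous ⇑d) :
    IsTopAut (fun x : L₁ => α x - β (d.symm (γ x))) ↔ IsTopAut ⇑α :=
  stmt_15_general U hUc hUo n α β hβ γ hγ d hd
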